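/- arXiv:math/0305078 — 5 statements merged into one kernel-verified Lean document; each statement's English description precedes it below -/
import Mathlib

section
/- Let F(X) ∈ ℤ[X] be a decomposable form of degree d in n variables that does not vanish on ℤⁿ \ {0}, and suppose V(F) is finite. Then 𝔪(F) ≥ n^{-d(n+1/2)/n}. -/
/-!
For every `S` with `|det S| = 1`, Minkowski's convex body theorem puts a nonzero integer point
`u = S y` in the cube `S([-1, 1]ⁿ)`. As `F` takes nonzero integer values there, `1 ≤ |F u|`, while
Cauchy–Schwarz on each linear factor of `F ∘ S` gives `|F (S y)| ≤ H(F ∘ S) · (√n)ᵈ`. Hence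
`H(F ∘ S) ≥ n^(-d/2) ≥ n^(-d(n + 1/2)/n)`, and the bound passes to the infimum `𝔪(F)`.
-/

open scoped BigOperators
open MeasureTheory

/-- The Euclidean (L²) norm of a coefficient vector in `ℂⁿ`. -/
noncomputable def e2norm {n : ℕ} (v : Fin n → ℂ) : ℝ := Real.sqrt (∑ j, ‖v j‖ ^ 2)

/-- Coefficient vectors of the linear factors of `F ∘ S`. -/
noncomputable def compMat {n d : ℕ} (L : Fin d → Fin n → ℂ)
    (S : Matrix (Fin n) (Fin n) ℝ) : Fin d → Fin n → ℂ :=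
  fun i j => ∑ k, L i k * (S k j : ℂ)

/-- The geometric height `𝔪(F) = inf {H(F∘S) : S ∈ GLₙ(ℝ), |det S| = 1}`. -/
noncomputable def mD {n d : ℕ} (L : Fin d → Fin n → ℂ) : ℝ :=
  sInf {h : ℝ | ∃ S : Matrix (Fin n) (Fin n) ℝ, |S.det| = 1 ∧
    h = ∏ i, e2norm (compMat L S i)}

open Matrix

theorem norm_sum_mul_le_e2norm_mul {n : ℕ} (v : Fin n → ℂ) (x : Fin n → ℝ) :
    ‖∑ j, v j * (x j : ℂ)‖ ≤ e2norm v * √(∑ j, x j ^ 2) :=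
  calc ‖∑ j, v j * (x j : ℂ)‖ ≤ ∑ j, ‖v j‖ * |x j| := (norm_sum_le _ _).trans_eq (by simp)
    _ ≤ √(∑ j, ‖v j‖ ^ 2) * √(∑ j, |x j| ^ 2) := Real.sum_mul_le_sqrt_mul_sqrt _ _ _
    _ = e2norm v * √(∑ j, x j ^ 2) := by simp [e2norm, sq_abs]

theorem sqrt_sum_sq_le_sqrt_card_mul_norm {n : ℕ} (x : Fin n → ℝ) :
    √(∑ j, x j ^ 2) ≤ √n * ‖x‖ := by
  have hsum : ∑ j, x j ^ 2 ≤ n * ‖x‖ ^ 2 :=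
    calc ∑ j, x j ^ 2 ≤ ∑ _j : Fin n, ‖x‖ ^ 2 := Finset.sum_le_sum fun j _ => by
          simpa [sq_abs] using pow_le_pow_left₀ (abs_nonneg _) (norm_le_pi_norm x j) 2
      _ = n * ‖x‖ ^ 2 := by simp
  calc √(∑ j, x j ^ 2) ≤ √(n * ‖x‖ ^ 2) := Real.sqrt_le_sqrt hsum
    _ = √n * ‖x‖ := by rw [Real.sqrt_mul (Nat.cast_nonneg n), Real.sqrt_sq (norm_nonneg x)]

theorem norm_prod_linearForms_le {n d : ℕ} (M : Fin d → Fin n → ℂ) (x : Fin n → ℝ) :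
    ‖∏ i, ∑ j, M i j * (x j : ℂ)‖ ≤ (∏ i, e2norm (M i)) * (√n * ‖x‖) ^ d :=
  calc ‖∏ i, ∑ j, M i j * (x j : ℂ)‖ = ∏ i, ‖∑ j, M i j * (x j : ℂ)‖ := norm_prod _ _
    _ ≤ ∏ i, e2norm (M i) * (√n * ‖x‖) :=
      Finset.prod_le_prod (fun i _ => norm_nonneg _) fun i _ =>
        (norm_sum_mul_le_e2norm_mul _ x).trans <|
          mul_le_mul_of_nonneg_left (sqrt_sum_sq_le_sqrt_card_mul_norm x) (Real.sqrt_nonneg _)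
    _ = (∏ i, e2norm (M i)) * (√n * ‖x‖) ^ d := by simp [Finset.prod_mul_distrib]

theorem sum_compMat_mul {n d : ℕ} (L : Fin d → Fin n → ℂ) (S : Matrix (Fin n) (Fin n) ℝ)
    (x : Fin n → ℝ) (i : Fin d) :
    ∑ j, compMat L S i j * (x j : ℂ) = ∑ k, L i k * ((S *ᵥ x) k : ℂ) := by
  simp only [compMat, mulVec, dotProduct, Complex.ofReal_sum, Complex.ofReal_mul,
    Finset.mul_sum, Finset.sum_mul, mul_assoc]
  exact Finset.sum_comm

-- `Fin n → ℝ` carries the sup norm, so `closedBall 0 1` is the cube `[-1, 1]ⁿ`.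
theorem exists_intCast_ne_zero_mem_mulVec_image_closedBall {n : ℕ} (hn : 0 < n)
    (S : Matrix (Fin n) (Fin n) ℝ) (hS : 1 ≤ |S.det|) :
    ∃ w : Fin n → ℤ, w ≠ 0 ∧ (fun j => (w j : ℝ)) ∈ S.mulVec '' Metric.closedBall 0 1 := by
  have : Nonempty (Fin n) := ⟨⟨0, hn⟩⟩
  set b := Pi.basisFun ℝ (Fin n)
  have : Countable (Submodule.span ℤ (Set.range b)).toAddSubgroup :=
    inferInstanceAs (Countable (Submodule.span ℤ (Set.range b)))
  have hvol : volume (ZSpan.fundamentalDomain b) * 2 ^ Module.finrank ℝ (Fin n → ℝ) ≤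
      volume (toLin' S '' Metric.closedBall 0 1) := by
    rw [Measure.addHaar_image_linearMap, LinearMap.det_toLin',
      Real.volume_pi_closedBall _ zero_le_one]
    simp only [b, ZSpan.fundamentalDomain_pi_basisFun, volume_pi_pi, Real.volume_Ico,
      sub_zero, ENNReal.ofReal_one, Finset.prod_const_one,
      Module.finrank_fintype_fun_eq_card, Fintype.card_fin, one_mul, mul_one, Nat.ofNat_nonneg,
      ENNReal.ofReal_pow, ENNReal.ofReal_ofNat]
    exact le_mul_of_one_le_left' (ENNReal.one_le_ofReal.mpr hS)
  obtain ⟨⟨u, hu⟩, hu0, hus⟩ := exists_ne_zero_mem_lattice_of_measure_mul_two_pow_le_measure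
    (ZSpan.isAddFundamentalDomain' b volume)
    (by rintro _ ⟨y, hy, rfl⟩; exact ⟨-y, by simpa using hy, map_neg _ y⟩)
    ((convex_closedBall 0 1).linear_image _)
    ((isCompact_closedBall 0 1).image (toLin' S).continuous_of_finiteDimensional) hvol
  choose w hw using (b.mem_span_iff_repr_mem ℤ u).mp hu
  obtain rfl : u = fun j => (w j : ℝ) := funext fun j => by simpa [b] using (hw j).symm
  refine ⟨w, fun h => hu0 (Subtype.ext (funext fun j => by simp [h])), ?_⟩
  simpa using hus

theorem one_le_prod_e2norm_compMat_mul_sqrt_pow {n d : ℕ} (hn : 0 < n)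
    (L : Fin d → Fin n → ℂ) (F : (Fin n → ℝ) → ℝ)
    (hF : ∀ x : Fin n → ℝ, (F x : ℂ) = ∏ i, ∑ j, L i j * (x j : ℂ))
    (hint : ∀ x : Fin n → ℤ, ∃ k : ℤ, F (fun j => (x j : ℝ)) = k)
    (hnv : ∀ x : Fin n → ℤ, x ≠ 0 → F (fun j => (x j : ℝ)) ≠ 0)
    (S : Matrix (Fin n) (Fin n) ℝ) (hS : 1 ≤ |S.det|) :
    1 ≤ (∏ i, e2norm (compMat L S i)) * √n ^ d := by
  obtain ⟨w, hw0, y, hy, hyw⟩ := exists_intCast_ne_zero_mem_mulVec_image_closedBall hn S hS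
  have h_one_le : 1 ≤ |F (fun j => (w j : ℝ))| := by
    obtain ⟨k, hk⟩ := hint w
    have hk0 : k ≠ 0 := by
      rintro rfl
      exact hnv w hw0 (by simpa using hk)
    rw [hk]
    exact_mod_cast Int.one_le_abs hk0
  have h_le : |F (fun j => (w j : ℝ))| ≤ (∏ i, e2norm (compMat L S i)) * (√n * ‖y‖) ^ d := by
    rw [← hyw, ← Real.norm_eq_abs, ← Complex.norm_real, hF]
    simp_rw [← sum_compMat_mul]
    exact norm_prod_linearForms_le _ y
  calc 1 ≤ (∏ i, e2norm (compMat L S i)) * (√n * ‖y‖) ^ d := h_one_le.trans h_le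
    _ ≤ (∏ i, e2norm (compMat L S i)) * √n ^ d := by
      gcongr
      · exact Finset.prod_nonneg fun i _ => Real.sqrt_nonneg _
      · exact mul_le_of_le_one_right (Real.sqrt_nonneg _) (mem_closedBall_zero_iff.mp hy)

theorem rpow_neg_le_inv_sqrt_pow {n : ℕ} (hn : 0 < n) (d : ℕ) :
    (n : ℝ) ^ (-(((d : ℝ) * ((n : ℝ) + 1 / 2)) / n)) ≤ (√n ^ d)⁻¹ := by
  have hn' : (1 : ℝ) ≤ n := Nat.one_le_cast.mpr hn
  rw [Real.sqrt_eq_rpow, ← Real.rpow_natCast, ← Real.rpow_mul (by positivity),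
    ← Real.rpow_neg (by positivity)]
  refine Real.rpow_le_rpow_of_exponent_le hn' (neg_le_neg ?_)
  rw [le_div_iff₀ (by positivity)]
  nlinarith

theorem mD_lower_bound_general (n d : ℕ) (hn : 0 < n)
    (L : Fin d → Fin n → ℂ) (F : (Fin n → ℝ) → ℝ)
    (hF : ∀ x : Fin n → ℝ, (F x : ℂ) = ∏ i, ∑ j, L i j * (x j : ℂ))
    (hint : ∀ x : Fin n → ℤ, ∃ k : ℤ, F (fun j => (x j : ℝ)) = k)
    (hnv : ∀ x : Fin n → ℤ, x ≠ 0 → F (fun j => (x j : ℝ)) ≠ 0) :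
    (n : ℝ) ^ (-(((d : ℝ) * ((n : ℝ) + 1 / 2)) / n)) ≤ mD L := by
  refine le_csInf ⟨_, 1, by simp, rfl⟩ ?_
  rintro _ ⟨S, hS, rfl⟩
  have hsqrt_pow_pos : 0 < √n ^ d := pow_pos (Real.sqrt_pos.mpr (Nat.cast_pos.mpr hn)) d
  exact (rpow_neg_le_inv_sqrt_pow hn d).trans <| (inv_le_iff_one_le_mul₀ hsqrt_pow_pos).mpr <|
    one_le_prod_e2norm_compMat_mul_sqrt_pow hn L F hF hint hnv S hS.ge

/-- Let `F ∈ ℤ[X]` be a decomposable form of degree `d` in `n`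
variables that does not vanish on `ℤⁿ \ {0}`, and suppose `V(F)` is finite.  Then
`𝔪(F) ≥ n^{-d(n + 1/2)/n}`. -/
theorem mD_lower_bound (n d : ℕ) (hn : 0 < n) (hd : 0 < d)
    (L : Fin d → Fin n → ℂ) (F : (Fin n → ℝ) → ℝ)
    (hF : ∀ x : Fin n → ℝ, (F x : ℂ) = ∏ i, ∑ j, L i j * (x j : ℂ))
    (hint : ∀ x : Fin n → ℤ, ∃ k : ℤ, F (fun j => (x j : ℝ)) = k)
    (hnv : ∀ x : Fin n → ℤ, x ≠ 0 → F (fun j => (x j : ℝ)) ≠ 0)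
    (hV : volume {x : Fin n → ℝ | |F x| ≤ 1} < ⊤) :
    (n : ℝ) ^ (-(((d : ℝ) * ((n : ℝ) + 1 / 2)) / n)) ≤ mD L :=
  mD_lower_bound_general n d hn L F hF hint hnv
end

section
/- Let F(X) ∈ ℤ[X] be a decomposable form of degree d in n variables not vanishing on ℤⁿ \ {0}, with V(F) finite. Let T ∈ GLₙ(ℝ) with |det T| = 1 achieve H(F∘T) = 𝔪(F), let P(T) be the parallelepiped spanned by ±columns of T, and let λ₁ be the first successive minimum of P(T) with respect to ℤⁿ. Then λ₁ ≥ n⁻¹ · 𝔪(F)^{-1/d}. -/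
open scoped BigOperators
open MeasureTheory
open scoped Pointwise

/-- The `(k+1)`-st successive minimum of `P ⊆ ℝⁿ` with respect to the lattice `ℤⁿ`. -/
noncomputable def succMin (n : ℕ) (P : Set (Fin n → ℝ)) (k : ℕ) : ℝ :=
  sInf {r : ℝ | 0 < r ∧ ∃ v : Fin (k + 1) → (Fin n → ℤ),
    LinearIndependent ℝ (fun i => (fun j => ((v i j : ℝ)) : Fin n → ℝ)) ∧
    ∀ i, (fun j => ((v i j : ℝ)) : Fin n → ℝ) ∈ r • P}


/-
Writing an integer point as `z = T a` with `|aⱼ| ≤ λ`, each linear factor of `F` at `z` is a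
linear form of `F ∘ T` evaluated at `a`, hence bounded by `nλ` times its coefficient norm; so
`1 ≤ |F(z)| ≤ (nλ)^d H(F ∘ T) = (nλ)^d 𝔪(F)`, i.e. `nλ ≥ 𝔪(F)^{-1/d}`.
-/

def symmParallelepiped {n : ℕ} (T : Matrix (Fin n) (Fin n) ℝ) : Set (Fin n → ℝ) :=
  {x | ∃ a : Fin n → ℝ, (∀ j, |a j| ≤ 1) ∧ x = T.mulVec a}

section SuccessiveMinimum

variable {n : ℕ}

theorem mem_smul_symmParallelepiped {T : Matrix (Fin n) (Fin n) ℝ} {r : ℝ} (hr : 0 < r)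
    {x : Fin n → ℝ} :
    x ∈ r • symmParallelepiped T ↔ ∃ b : Fin n → ℝ, (∀ j, |b j| ≤ r) ∧ x = T.mulVec b := by
  constructor
  · rintro ⟨_, ⟨a, ha, rfl⟩, rfl⟩
    refine ⟨r • a, fun j => ?_, (Matrix.mulVec_smul T r a).symm⟩
    simpa [abs_mul, abs_of_pos hr] using mul_le_mul_of_nonneg_left (ha j) hr.le
  · rintro ⟨b, hb, rfl⟩
    refine ⟨T.mulVec (r⁻¹ • b), ⟨r⁻¹ • b, fun j => ?_, rfl⟩, ?_⟩
    · simpa [abs_mul, abs_of_pos hr, inv_mul_le_iff₀ hr] using hb j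
    · dsimp only
      rw [← Matrix.mulVec_smul, smul_inv_smul₀ hr.ne']

theorem exists_mem_smul_symmParallelepiped {T : Matrix (Fin n) (Fin n) ℝ} (hT : IsUnit T.det)
    (x : Fin n → ℝ) : ∃ r : ℝ, 0 < r ∧ x ∈ r • symmParallelepiped T := by
  set b := T⁻¹.mulVec x
  refine ⟨‖b‖ + 1, by positivity, (mem_smul_symmParallelepiped (by positivity)).2
    ⟨b, fun j => ?_, ?_⟩⟩
  · linarith [norm_le_pi_norm b j, Real.norm_eq_abs (b j)]
  · rw [Matrix.mulVec_mulVec, Matrix.mul_nonsing_inv _ hT, Matrix.one_mulVec]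

theorem le_succMin_zero {P : Set (Fin n → ℝ)} {c : ℝ}
    (hne : ∃ r : ℝ, 0 < r ∧ ∃ z : Fin n → ℤ, z ≠ 0 ∧ (fun j => (z j : ℝ)) ∈ r • P)
    (hle : ∀ r : ℝ, 0 < r → ∀ z : Fin n → ℤ, z ≠ 0 → (fun j => (z j : ℝ)) ∈ r • P → c ≤ r) :
    c ≤ succMin n P 0 := by
  have cast_ne_zero : ∀ z : Fin n → ℤ, (fun j => (z j : ℝ)) ≠ 0 ↔ z ≠ 0 := fun z => by
    simp [funext_iff]
  obtain ⟨r, hr, z, hz, hmem⟩ := hne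
  refine le_csInf ⟨r, hr, fun _ => z, ?_, fun _ => hmem⟩ ?_
  · have : Subsingleton (Fin (0 + 1)) := inferInstanceAs (Subsingleton (Fin 1))
    exact .of_subsingleton 0 ((cast_ne_zero z).2 hz)
  · rintro s ⟨hs, v, hv, hvs⟩
    exact hle s hs (v 0) ((cast_ne_zero _).1 (hv.ne_zero 0)) (hvs 0)

end SuccessiveMinimum

section LinearForms

variable {n d : ℕ}

theorem norm_le_e2norm (v : Fin n → ℂ) (k : Fin n) : ‖v k‖ ≤ e2norm v :=
  Real.le_sqrt_of_sq_le <|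
    Finset.single_le_sum (f := fun j => ‖v j‖ ^ 2) (fun _ _ => sq_nonneg _) (Finset.mem_univ k)

theorem norm_sum_mul_le {c : Fin n → ℂ} {b : Fin n → ℝ} {r : ℝ} (hb : ∀ k, |b k| ≤ r) :
    ‖∑ k, c k * (b k : ℂ)‖ ≤ n * r * e2norm c :=
  calc ‖∑ k, c k * (b k : ℂ)‖ ≤ ∑ k, ‖c k‖ * |b k| := (norm_sum_le _ _).trans_eq <| by
        simp only [norm_mul, Complex.norm_real, Real.norm_eq_abs]
    _ ≤ ∑ _k : Fin n, e2norm c * r := Finset.sum_le_sum fun k _ =>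
        mul_le_mul (norm_le_e2norm c k) (hb k) (abs_nonneg _) (by unfold e2norm; positivity)
    _ = n * r * e2norm c := by
        simp only [Finset.sum_const, Finset.card_univ, Fintype.card_fin, nsmul_eq_mul]
        ring

theorem sum_mul_mulVec_eq_sum_compMat (L : Fin d → Fin n → ℂ) (T : Matrix (Fin n) (Fin n) ℝ)
    (b : Fin n → ℝ) (i : Fin d) :
    ∑ j, L i j * (T.mulVec b j : ℂ) = ∑ k, compMat L T i k * (b k : ℂ) := by
  simp only [compMat, Matrix.mulVec, dotProduct, Complex.ofReal_sum, Complex.ofReal_mul,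
    Finset.mul_sum, Finset.sum_mul, mul_assoc]
  exact Finset.sum_comm

theorem abs_le_of_forall_abs_le {L : Fin d → Fin n → ℂ} {F : (Fin n → ℝ) → ℝ}
    (hF : ∀ x : Fin n → ℝ, (F x : ℂ) = ∏ i, ∑ j, L i j * (x j : ℂ))
    (T : Matrix (Fin n) (Fin n) ℝ) {b : Fin n → ℝ} {r : ℝ} (hb : ∀ k, |b k| ≤ r) :
    |F (T.mulVec b)| ≤ (n * r) ^ d * ∏ i, e2norm (compMat L T i) := by
  rw [← Real.norm_eq_abs, ← Complex.norm_real, hF, norm_prod]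
  calc ∏ i, ‖∑ j, L i j * (T.mulVec b j : ℂ)‖ ≤ ∏ i, n * r * e2norm (compMat L T i) :=
        Finset.prod_le_prod (fun _ _ => norm_nonneg _) fun i _ => by
          rw [sum_mul_mulVec_eq_sum_compMat]; exact norm_sum_mul_le hb
    _ = (n * r) ^ d * ∏ i, e2norm (compMat L T i) := by
        rw [Finset.prod_mul_distrib, Finset.prod_const, Finset.card_univ, Fintype.card_fin]

end LinearForms

theorem rpow_neg_inv_le_of_one_le_pow_mul {m s : ℝ} {d : ℕ} (hd : 0 < d) (hm : 0 < m)
    (hs : 0 ≤ s) (h : 1 ≤ s ^ d * m) : m ^ (-(1 : ℝ) / d) ≤ s := by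
  rw [neg_div, Real.rpow_neg hm.le, ← Real.inv_rpow hm.le, one_div,
    Real.rpow_inv_le_iff_of_pos (inv_nonneg.2 hm.le) hs (by positivity), Real.rpow_natCast,
    inv_le_iff_one_le_mul₀ hm]
  exact h

theorem first_minimum_lower_general (n d : ℕ) (hn : 0 < n) (hd : 0 < d)
    (L : Fin d → Fin n → ℂ) (F : (Fin n → ℝ) → ℝ)
    (hF : ∀ x : Fin n → ℝ, (F x : ℂ) = ∏ i, ∑ j, L i j * (x j : ℂ))
    (hint : ∀ x : Fin n → ℤ, ∃ k : ℤ, F (fun j => (x j : ℝ)) = k)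
    (hnv : ∀ x : Fin n → ℤ, x ≠ 0 → F (fun j => (x j : ℝ)) ≠ 0)
    (T : Matrix (Fin n) (Fin n) ℝ) (hT : |T.det| = 1)
    (hmin : ∏ i, e2norm (compMat L T i) = mD L) :
    (n : ℝ)⁻¹ * mD L ^ (-(1 : ℝ) / d)
      ≤ succMin n {x : Fin n → ℝ |
          ∃ a : Fin n → ℝ, (∀ j, |a j| ≤ 1) ∧ x = T.mulVec a} 0 := by
  have key : ∀ r : ℝ, 0 < r → ∀ z : Fin n → ℤ, z ≠ 0 →
      (fun j => (z j : ℝ)) ∈ r • symmParallelepiped T → 1 ≤ (n * r) ^ d * mD L := by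
    intro r hr z hz hmem
    obtain ⟨b, hb, hzb⟩ := (mem_smul_symmParallelepiped hr).1 hmem
    obtain ⟨k, hk⟩ := hint z
    have hk0 : k ≠ 0 := by rintro rfl; exact hnv z hz (by simpa using hk)
    calc (1 : ℝ) ≤ |F (fun j => (z j : ℝ))| := by rw [hk]; exact_mod_cast Int.one_le_abs hk0
      _ ≤ (n * r) ^ d * mD L := by rw [hzb, ← hmin]; exact abs_le_of_forall_abs_le hF T hb
  have hne : ∃ r : ℝ, 0 < r ∧ ∃ z : Fin n → ℤ, z ≠ 0 ∧
      (fun j => (z j : ℝ)) ∈ r • symmParallelepiped T := by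
    have hdet : IsUnit T.det := isUnit_iff_ne_zero.2 fun h => by simp [h] at hT
    obtain ⟨r, hr, hmem⟩ := exists_mem_smul_symmParallelepiped hdet (Pi.single ⟨0, hn⟩ 1)
    refine ⟨r, hr, Pi.single ⟨0, hn⟩ 1, by simp, ?_⟩
    convert hmem using 1
    ext j
    simp [Pi.single_apply]
  obtain ⟨r₀, hr₀, z₀, hz₀, hmem₀⟩ := hne
  have hm : 0 < mD L := pos_of_mul_pos_right (zero_lt_one.trans_le (key r₀ hr₀ z₀ hz₀ hmem₀))
    (by positivity)
  refine le_succMin_zero ⟨r₀, hr₀, z₀, hz₀, hmem₀⟩ fun r hr z hz hmem => ?_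
  rw [inv_mul_le_iff₀ (by exact_mod_cast hn)]
  exact rpow_neg_inv_le_of_one_le_pow_mul hd hm (by positivity) (key r hr z hz hmem)

/-- Let `F ∈ ℤ[X]` be a decomposable form of degree `d` in `n`
variables not vanishing on `ℤⁿ \ {0}`, with `V(F)` finite.  Let `T ∈ GLₙ(ℝ)` with
`|det T| = 1` achieve `H(F∘T) = 𝔪(F)`, let `P(T)` be the parallelepiped spanned by
the `±`columns of `T`, and let `λ₁` be its first successive minimum with respect to
`ℤⁿ`.  Then `λ₁ ≥ n⁻¹ · 𝔪(F)^{-1/d}`. -/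
theorem first_minimum_lower (n d : ℕ) (hn : 0 < n) (hd : 0 < d)
    (L : Fin d → Fin n → ℂ) (F : (Fin n → ℝ) → ℝ)
    (hF : ∀ x : Fin n → ℝ, (F x : ℂ) = ∏ i, ∑ j, L i j * (x j : ℂ))
    (hint : ∀ x : Fin n → ℤ, ∃ k : ℤ, F (fun j => (x j : ℝ)) = k)
    (hnv : ∀ x : Fin n → ℤ, x ≠ 0 → F (fun j => (x j : ℝ)) ≠ 0)
    (hV : volume {x : Fin n → ℝ | |F x| ≤ 1} < ⊤)
    (T : Matrix (Fin n) (Fin n) ℝ) (hT : |T.det| = 1)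
    (hmin : ∏ i, e2norm (compMat L T i) = mD L) :
    (n : ℝ)⁻¹ * mD L ^ (-(1 : ℝ) / d)
      ≤ succMin n {x : Fin n → ℝ |
          ∃ a : Fin n → ℝ, (∀ j, |a j| ≤ 1) ∧ x = T.mulVec a} 0 :=
  first_minimum_lower_general n d hn hd L F hF hint hnv T hT hmin
end

section
/- Let d ≥ 4 be even, l = d/2, 0 < ε ≤ 1/3, and F_ε(X,Y) = (X^l − (εY)^l)((εX)^l − Y^l). If 1 ≤ y ≤ (3ε)^{-1/2} and εy ≤ x ≤ 1/(3y) are real numbers, then |F_ε(x,y)| < 1. -/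
open scoped BigOperators

/-- Let `d ≥ 4` be even, `l = d/2`, `0 < ε ≤ 1/3`, and
`F_ε(X,Y) = (X^l − (εY)^l)((εX)^l − Y^l)`.  If `1 ≤ y ≤ (3ε)^{-1/2}` and
`εy ≤ x ≤ 1/(3y)` are real numbers, then `|F_ε(x,y)| < 1`. -/
theorem Feps_small_on_region (d l : ℕ) (hd : 4 ≤ d) (hdl : d = 2 * l)
    (ε : ℝ) (hε0 : 0 < ε) (hε : ε ≤ 1 / 3)
    (x y : ℝ) (hy1 : 1 ≤ y) (hy2 : y ≤ (3 * ε) ^ (-(1 : ℝ) / 2))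
    (hx1 : ε * y ≤ x) (hx2 : x ≤ 1 / (3 * y)) :
    |(x ^ l - (ε * y) ^ l) * ((ε * x) ^ l - y ^ l)| < 1 := by
  have hl : 2 ≤ l := by omega
  have hy0 : 0 < y := lt_of_lt_of_le one_pos hy1
  have hεy : 0 < ε * y := mul_pos hε0 hy0
  have hx0 : 0 < x := lt_of_lt_of_le hεy hx1
  have h3y : 0 < 3 * y := by linarith
  have hkey : x * (3 * y) ≤ 1 := (le_div_iff₀ h3y).mp hx2
  have hεx : ε * x ≤ y := by nlinarith
  have hxy : x * y ≤ 1 / 3 := by nlinarith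
  have ha : |x ^ l - (ε * y) ^ l| ≤ x ^ l := by
    rw [abs_sub_le_iff]
    constructor
    · nlinarith [pow_nonneg hεy.le l]
    · have := pow_le_pow_left₀ hεy.le hx1 l
      have := pow_nonneg hx0.le l
      nlinarith
  have hb : |(ε * x) ^ l - y ^ l| ≤ y ^ l := by
    rw [abs_sub_le_iff]
    constructor
    · have := pow_le_pow_left₀ (mul_pos hε0 hx0).le hεx l
      have := pow_nonneg hy0.le l
      nlinarith
    · nlinarith [pow_nonneg (mul_pos hε0 hx0).le l, pow_nonneg hy0.le l]
  calc |(x ^ l - (ε * y) ^ l) * ((ε * x) ^ l - y ^ l)|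
      = |x ^ l - (ε * y) ^ l| * |(ε * x) ^ l - y ^ l| := abs_mul _ _
    _ ≤ x ^ l * y ^ l := by
        exact mul_le_mul ha hb (abs_nonneg _) (pow_nonneg hx0.le l)
    _ = (x * y) ^ l := (mul_pow x y l).symm
    _ ≤ (1 / 3) ^ l := pow_le_pow_left₀ (by positivity) hxy l
    _ < 1 := pow_lt_one₀ (by norm_num) (by norm_num) (by omega)
end

section
/- Let d ≥ 4 be even, l = d/2, and 0 < ε < (3e)⁻². Let F_ε(X,Y) = (X^l − (εY)^l)((εX)^l − Y^l) and V(F_ε) be the area of {(x,y) ∈ ℝ² : |F_ε(x,y)| ≤ 1}. Then V(F_ε) > (−log ε)/12. -/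
/-!
For `y ≥ 1` and `εy ≤ x ≤ 1/(3y)` both factors of `F_ε(x, y)` lie between `0` and `x^l`,
resp. `y^l`, in absolute value, so `|F_ε(x, y)| ≤ (xy)^l ≤ 1`. The region between the line
`x = εy` and the hyperbola `x = 1/(3y)` over `1 ≤ y ≤ (3ε)^{-1/2}` has area
`(−log 3 − log ε − 1)/6 + ε/2`, which beats `(−log ε)/12` as soon as `ε < (3e)⁻²`.
-/

open MeasureTheory Real Set

lemma abs_sub_pow_mul_sub_pow_le_one {ε x y : ℝ} (l : ℕ) (hε : 0 ≤ ε) (hx : 0 ≤ x) (hy : 0 ≤ y)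
    (hεyx : ε * y ≤ x) (hεxy : ε * x ≤ y) (hxy : x * y ≤ 1) :
    |(x ^ l - (ε * y) ^ l) * ((ε * x) ^ l - y ^ l)| ≤ 1 := by
  have hεy : 0 ≤ ε * y := mul_nonneg hε hy
  have hεx : 0 ≤ ε * x := mul_nonneg hε hx
  have h₁ : |x ^ l - (ε * y) ^ l| ≤ x ^ l :=
    abs_sub_le_of_nonneg_of_le (by positivity) le_rfl (by positivity)
      (pow_le_pow_left₀ hεy hεyx l)
  have h₂ : |(ε * x) ^ l - y ^ l| ≤ y ^ l :=
    abs_sub_le_of_nonneg_of_le (by positivity) (pow_le_pow_left₀ hεx hεxy l) (by positivity)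
      le_rfl
  calc |(x ^ l - (ε * y) ^ l) * ((ε * x) ^ l - y ^ l)|
      = |x ^ l - (ε * y) ^ l| * |(ε * x) ^ l - y ^ l| := abs_mul _ _
    _ ≤ x ^ l * y ^ l := mul_le_mul h₁ h₂ (abs_nonneg _) (by positivity)
    _ = (x * y) ^ l := (mul_pow x y l).symm
    _ ≤ 1 := pow_le_one₀ (mul_nonneg hx hy) hxy

lemma swap_preimage_regionBetween_subset {ε : ℝ} (l : ℕ) (hε₀ : 0 ≤ ε) (hε₁ : ε ≤ 1)
    {s : Set ℝ} (hs : s ⊆ Ici 1) :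
    Prod.swap ⁻¹' regionBetween (fun y ↦ ε * y) (fun y ↦ (3 * y)⁻¹) s ⊆
      {p : ℝ × ℝ | |(p.1 ^ l - (ε * p.2) ^ l) * ((ε * p.1) ^ l - p.2 ^ l)| ≤ 1} := by
  rintro ⟨x, y⟩ ⟨hy : y ∈ s, hεyx : ε * y < x, hx3y : x < (3 * y)⁻¹⟩
  have hy₁ : 1 ≤ y := hs hy
  have hy₀ : 0 < y := one_pos.trans_le hy₁
  have hx₀ : 0 ≤ x := (mul_nonneg hε₀ hy₀.le).trans hεyx.le
  have hxy : x * y ≤ 1 := by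
    have : x * (3 * y) < 1 := by
      rwa [inv_eq_one_div, lt_div_iff₀ (by positivity)] at hx3y
    nlinarith
  have hεxy : ε * x ≤ y := by
    have : x ≤ y := by nlinarith
    exact (mul_le_of_le_one_left hx₀ hε₁).trans this
  exact abs_sub_pow_mul_sub_pow_le_one l hε₀ hx₀ hy₀.le hεyx.le hεxy hxy

lemma integral_inv_three_mul_sub_const_mul (ε : ℝ) {M : ℝ} (hM : 1 ≤ M) :
    ∫ y in (1 : ℝ)..M, ((3 * y)⁻¹ - ε * y) = log M / 3 - ε * (M ^ 2 - 1) / 2 := by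
  have hM₀ : 0 < M := one_pos.trans_le hM
  have h₀ : (0 : ℝ) ∉ uIcc 1 M := by
    rw [uIcc_of_le hM]
    exact fun h ↦ absurd h.1 (by norm_num)
  have hinv : IntervalIntegrable (fun y : ℝ ↦ 3⁻¹ * y⁻¹) volume 1 M :=
    (intervalIntegral.intervalIntegrable_inv (fun y hy h ↦ h₀ (h ▸ hy))
      continuousOn_id).const_mul _
  have hlin : IntervalIntegrable (fun y : ℝ ↦ ε * y) volume 1 M :=
    (continuous_const.mul continuous_id).intervalIntegrable 1 M
  simp_rw [mul_inv]
  rw [intervalIntegral.integral_sub hinv hlin, intervalIntegral.integral_const_mul,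
    intervalIntegral.integral_const_mul, integral_inv_of_pos one_pos hM₀, integral_id, div_one]
  ring

lemma volume_regionBetween_line_hyperbola {ε M : ℝ} (hε : 0 ≤ ε) (hM : 1 ≤ M)
    (hεM : ε * M ^ 2 ≤ 3⁻¹) :
    volume (regionBetween (fun y ↦ ε * y) (fun y ↦ (3 * y)⁻¹) (Ioc 1 M)) =
      ENNReal.ofReal (log M / 3 - ε * (M ^ 2 - 1) / 2) := by
  have hline : IntegrableOn (fun y ↦ ε * y) (Ioc 1 M) :=
    (continuous_const.mul continuous_id).integrableOn_Icc.mono_set Ioc_subset_Icc_self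
  have hhyp : IntegrableOn (fun y : ℝ ↦ (3 * y)⁻¹) (Ioc 1 M) :=
    ((continuousOn_const.mul continuousOn_id).inv₀ fun y hy ↦
      mul_ne_zero three_ne_zero (one_pos.trans_le hy.1).ne').integrableOn_Icc.mono_set
      Ioc_subset_Icc_self
  have hle : ∀ y ∈ Ioc 1 M, ε * y ≤ (3 * y)⁻¹ := by
    rintro y ⟨hy₁, hyM⟩
    have hy₀ : 0 < y := one_pos.trans hy₁
    rw [inv_eq_one_div, le_div_iff₀ (by positivity)]
    have : y ^ 2 ≤ M ^ 2 := pow_le_pow_left₀ hy₀.le hyM 2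
    nlinarith
  rw [Measure.volume_eq_prod, volume_regionBetween_eq_integral hline hhyp measurableSet_Ioc hle,
    ← intervalIntegral.integral_of_le hM]
  exact congrArg ENNReal.ofReal (integral_inv_three_mul_sub_const_mul ε hM)

theorem Feps_volume_lower_general (l : ℕ)
    (ε : ℝ) (hε0 : 0 < ε) (hε : ε < ((3 * Real.exp 1) ^ 2)⁻¹) :
    ENNReal.ofReal (-Real.log ε / 12)
      < volume {p : ℝ × ℝ |
          |(p.1 ^ l - (ε * p.2) ^ l) * ((ε * p.1) ^ l - p.2 ^ l)| ≤ 1} := by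
  have hε9 : ε < 9⁻¹ :=
    hε.trans_le (inv_anti₀ (by norm_num) (by nlinarith [add_one_le_exp (1 : ℝ)]))
  have hlog : log ε < -2 * (log 3 + 1) := by
    have := log_lt_log hε0 hε
    rw [log_inv, log_pow, log_mul three_ne_zero (exp_pos 1).ne', log_exp, Nat.cast_ofNat] at this
    linarith
  have hlogε : 0 ≤ -log ε := by linarith [log_pos (by norm_num : (1 : ℝ) < 3)]
  set M := √(3 * ε)⁻¹
  have hM : 1 ≤ M := one_le_sqrt.mpr ((one_le_inv₀ (by positivity)).mpr (by linarith))
  have hεM : ε * M ^ 2 = 3⁻¹ := by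
    rw [sq_sqrt (by positivity)]
    field_simp
  have hlogM : log M = -(log 3 + log ε) / 2 := by
    rw [log_sqrt (by positivity), log_inv, log_mul three_ne_zero hε0.ne', neg_div]
  let R := regionBetween (fun y ↦ ε * y) (fun y ↦ (3 * y)⁻¹) (Ioc 1 M)
  calc ENNReal.ofReal (-log ε / 12)
      < ENNReal.ofReal (log M / 3 - ε * (M ^ 2 - 1) / 2) := by
        rw [ENNReal.ofReal_lt_ofReal_iff_of_nonneg (by linarith), hlogM, mul_sub, hεM]
        linarith
    _ = volume R := (volume_regionBetween_line_hyperbola hε0.le hM hεM.le).symm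
    _ = volume (Prod.swap ⁻¹' R) :=
        ((Measure.measurePreserving_swap (μ := volume) (ν := volume)).measure_preimage_equiv
          (f := MeasurableEquiv.prodComm) R).symm
    _ ≤ _ := measure_mono <| swap_preimage_regionBetween_subset l hε0.le (by linarith)
        (Ioc_subset_Ioi_self.trans Ioi_subset_Ici_self)

/-- Let `d ≥ 4` be even, `l = d/2`, and `0 < ε < (3e)⁻²`.  Let
`F_ε(X,Y) = (X^l − (εY)^l)((εX)^l − Y^l)` and let `V(F_ε)` be the area of
`{(x,y) ∈ ℝ² : |F_ε(x,y)| ≤ 1}`.  Then `V(F_ε) > (−log ε)/12`. -/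
theorem Feps_volume_lower (d l : ℕ) (hd : 4 ≤ d) (hdl : d = 2 * l)
    (ε : ℝ) (hε0 : 0 < ε) (hε : ε < ((3 * Real.exp 1) ^ 2)⁻¹) :
    ENNReal.ofReal (-Real.log ε / 12)
      < volume {p : ℝ × ℝ |
          |(p.1 ^ l - (ε * p.2) ^ l) * ((ε * p.1) ^ l - p.2 ^ l)| ≤ 1} :=
  Feps_volume_lower_general l ε hε0 hε
end

section
/- Let d ≥ 4 be even, l = d/2, 0 < ε ≤ 1/3, and F_ε(X,Y) = ∏ᵢ₌₁^l (X − ρⁱεY)(ρⁱεX − Y) with ρ a primitive l-th root of unity. Then for every T ∈ GL₂(ℝ) with |det T| = 1, the height H(F_ε∘T) (product of the Euclidean norms of the coefficient vectors of the 2l linear factors composed with T) satisfies H(F_ε∘T) ≥ (1 − ε²)^l. Consequently (1+ε²)^l = H(F_ε) ≥ 𝔪(F_ε) ≥ (1−ε²)^l. -/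
open scoped BigOperators

/-- The coefficient vectors of the `2l` linear factors of
`F_ε(X,Y) = ∏ᵢ₌₁^l (X − ρⁱεY)(ρⁱεX − Y)`:  for `i ≤ l` the vector `(1, −ρⁱε)`, and for
`l < i ≤ 2l` the vector `(ρ^{i−l}ε, −1)`. -/
noncomputable def LFeps (l : ℕ) (ε : ℝ) (ρ : ℂ) : Fin (2 * l) → Fin 2 → ℂ :=
  fun i => if (i : ℕ) < l then ![1, -(ρ ^ ((i : ℕ) + 1) * (ε : ℂ))]
    else ![ρ ^ ((i : ℕ) - l + 1) * (ε : ℂ), -1]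

/-!
Pair the `i`-th linear factor with the `(i + l)`-th. Composing with `T` multiplies the `2 × 2`
determinant of a pair of coefficient vectors by `det T`, so when `|det T| = 1` Hadamard's inequality
bounds the product of the two norms from below by `|det (Lᵢ, L_{i+l})| = |(ρⁱε)² − 1| ≥ 1 − ε²`.
Taking `T = 1` gives the upper bound on `𝔪(F_ε)`.
-/

open Finset

lemma e2norm_fin_two (v : Fin 2 → ℂ) : e2norm v = √(‖v 0‖ ^ 2 + ‖v 1‖ ^ 2) := by
  simp [e2norm, Fin.sum_univ_two]

lemma norm_det_fin_two_le (u v : Fin 2 → ℂ) :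
    ‖(Matrix.of ![u, v]).det‖ ≤ e2norm u * e2norm v := by
  rw [Matrix.det_fin_two, e2norm_fin_two, e2norm_fin_two, ← Real.sqrt_mul (by positivity),
    Real.le_sqrt (by positivity) (by positivity)]
  simp only [Matrix.of_apply, Matrix.cons_val_zero, Matrix.cons_val_one]
  have hsub : ‖u 0 * v 1 - u 1 * v 0‖ ≤ ‖u 0‖ * ‖v 1‖ + ‖u 1‖ * ‖v 0‖ := by
    simpa only [norm_mul] using norm_sub_le (u 0 * v 1) (u 1 * v 0)
  calc ‖u 0 * v 1 - u 1 * v 0‖ ^ 2 ≤ (‖u 0‖ * ‖v 1‖ + ‖u 1‖ * ‖v 0‖) ^ 2 := by gcongr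
    _ ≤ (‖u 0‖ ^ 2 + ‖u 1‖ ^ 2) * (‖v 0‖ ^ 2 + ‖v 1‖ ^ 2) := by
      nlinarith [sq_nonneg (‖u 0‖ * ‖v 0‖ - ‖u 1‖ * ‖v 1‖)]

lemma rows_compMat_eq_mul {n d : ℕ} (L : Fin d → Fin n → ℂ) (S : Matrix (Fin n) (Fin n) ℝ)
    (i j : Fin d) :
    Matrix.of ![compMat L S i, compMat L S j] =
      Matrix.of ![L i, L j] * Complex.ofRealHom.mapMatrix S := by
  ext a b
  fin_cases a <;> simp [compMat, Matrix.vecMul, dotProduct]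

lemma det_rows_compMat {d : ℕ} (L : Fin d → Fin 2 → ℂ) (T : Matrix (Fin 2) (Fin 2) ℝ)
    (i j : Fin d) :
    (Matrix.of ![compMat L T i, compMat L T j]).det = (Matrix.of ![L i, L j]).det * T.det := by
  rw [rows_compMat_eq_mul, Matrix.det_mul, ← Complex.ofRealHom.map_det]
  rfl

lemma norm_det_rows_le_e2norm_compMat_mul {d : ℕ} (L : Fin d → Fin 2 → ℂ)
    {T : Matrix (Fin 2) (Fin 2) ℝ} (hT : |T.det| = 1) (i j : Fin d) :
    ‖(Matrix.of ![L i, L j]).det‖ ≤ e2norm (compMat L T i) * e2norm (compMat L T j) := by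
  simpa [det_rows_compMat, hT] using norm_det_fin_two_le (compMat L T i) (compMat L T j)

lemma prod_fin_two_mul {M : Type*} [CommMonoid M] {l : ℕ} (f : Fin (2 * l) → M) :
    ∏ i, f i = ∏ i : Fin l, f ⟨i, by omega⟩ * f ⟨l + i, by omega⟩ := by
  rw [← Fin.prod_congr' f (two_mul l).symm, Fin.prod_univ_add, ← prod_mul_distrib]
  rfl

lemma pow_le_prod_e2norm_compMat {l : ℕ} (L : Fin (2 * l) → Fin 2 → ℂ) {c : ℝ} (hc : 0 ≤ c)
    (hL : ∀ i : Fin l, c ≤ ‖(Matrix.of ![L ⟨i, by omega⟩, L ⟨l + i, by omega⟩]).det‖)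
    {T : Matrix (Fin 2) (Fin 2) ℝ} (hT : |T.det| = 1) :
    c ^ l ≤ ∏ i, e2norm (compMat L T i) := by
  rw [prod_fin_two_mul]
  calc c ^ l = ∏ _i : Fin l, c := by simp
    _ ≤ _ := prod_le_prod (fun _ _ => hc) fun i _ =>
      (hL i).trans (norm_det_rows_le_e2norm_compMat_mul L hT _ _)

lemma compMat_one {n d : ℕ} (L : Fin d → Fin n → ℂ) : compMat L 1 = L := by
  funext i j
  simp [compMat, Matrix.one_apply, apply_ite]

lemma mD_le_prod_e2norm {n d : ℕ} (L : Fin d → Fin n → ℂ) : mD L ≤ ∏ i, e2norm (L i) := by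
  refine csInf_le ⟨0, ?_⟩ ⟨1, by simp, by rw [compMat_one]⟩
  rintro _ ⟨S, -, rfl⟩
  exact prod_nonneg fun i _ => Real.sqrt_nonneg _

lemma le_mD {n d : ℕ} {L : Fin d → Fin n → ℂ} {c : ℝ}
    (h : ∀ S : Matrix (Fin n) (Fin n) ℝ, |S.det| = 1 → c ≤ ∏ i, e2norm (compMat L S i)) :
    c ≤ mD L := by
  refine le_csInf ⟨_, 1, by simp, rfl⟩ ?_
  rintro _ ⟨S, hS, rfl⟩
  exact h S hS

section LFeps

variable {l : ℕ} (ε : ℝ) (ρ : ℂ)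

lemma det_LFeps_pair (i : Fin l) :
    (Matrix.of ![LFeps l ε ρ ⟨i, by omega⟩, LFeps l ε ρ ⟨l + i, by omega⟩]).det =
      (ρ ^ ((i : ℕ) + 1) * ε) ^ 2 - 1 := by
  simp only [LFeps, Fin.is_lt, ↓reduceIte, add_lt_iff_neg_left, not_lt_zero, add_tsub_cancel_left,
    Matrix.det_fin_two, Matrix.of_apply, Matrix.cons_val_zero, Matrix.cons_val_one]
  ring

lemma one_sub_sq_le_norm_det_LFeps_pair (hρ : ‖ρ‖ = 1) (i : Fin l) :
    1 - ε ^ 2 ≤ ‖(Matrix.of ![LFeps l ε ρ ⟨i, by omega⟩, LFeps l ε ρ ⟨l + i, by omega⟩]).det‖ := by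
  have := norm_sub_norm_le (1 : ℂ) ((ρ ^ ((i : ℕ) + 1) * ε) ^ 2)
  rw [det_LFeps_pair, norm_sub_rev]
  simpa [norm_mul, norm_pow, hρ, sq_abs] using this

lemma e2norm_LFeps (hρ : ‖ρ‖ = 1) (i : Fin (2 * l)) :
    e2norm (LFeps l ε ρ i) = √(1 + ε ^ 2) := by
  unfold LFeps
  split_ifs <;> simp [e2norm_fin_two, norm_pow, hρ, sq_abs, add_comm]

lemma prod_e2norm_LFeps (hρ : ‖ρ‖ = 1) :
    ∏ i, e2norm (LFeps l ε ρ i) = (1 + ε ^ 2) ^ l := by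
  simp [e2norm_LFeps ε ρ hρ, pow_mul, Real.sq_sqrt (by positivity : (0 : ℝ) ≤ 1 + ε ^ 2)]

end LFeps

/-- Let `d ≥ 4` be even, `l = d/2`, `0 < ε ≤ 1/3`, and
`F_ε(X,Y) = ∏ᵢ₌₁^l (X − ρⁱεY)(ρⁱεX − Y)` with `ρ` a primitive `l`-th root of unity.
Then for every `T ∈ GL₂(ℝ)` with `|det T| = 1` the height `H(F_ε ∘ T)` satisfies
`H(F_ε ∘ T) ≥ (1 − ε²)^l`; consequently `(1+ε²)^l = H(F_ε) ≥ 𝔪(F_ε) ≥ (1−ε²)^l`. -/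
theorem Feps_height_bounds (d l : ℕ) (hd : 4 ≤ d) (hdl : d = 2 * l)
    (ε : ℝ) (hε0 : 0 < ε) (hε : ε ≤ 1 / 3)
    (ρ : ℂ) (hρ : IsPrimitiveRoot ρ l) :
    (∀ T : Matrix (Fin 2) (Fin 2) ℝ, |T.det| = 1 →
      (1 - ε ^ 2) ^ l ≤ ∏ i, e2norm (compMat (LFeps l ε ρ) T i)) ∧
    (∏ i, e2norm (LFeps l ε ρ i)) = (1 + ε ^ 2) ^ l ∧
    mD (LFeps l ε ρ) ≤ (1 + ε ^ 2) ^ l ∧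
    (1 - ε ^ 2) ^ l ≤ mD (LFeps l ε ρ) := by
  have hρ1 : ‖ρ‖ = 1 := hρ.norm'_eq_one (by omega)
  have hε1 : 0 ≤ 1 - ε ^ 2 := by nlinarith
  have lower : ∀ T : Matrix (Fin 2) (Fin 2) ℝ, |T.det| = 1 →
      (1 - ε ^ 2) ^ l ≤ ∏ i, e2norm (compMat (LFeps l ε ρ) T i) := fun _ hT =>
    pow_le_prod_e2norm_compMat _ hε1 (one_sub_sq_le_norm_det_LFeps_pair ε ρ hρ1) hT
  have height := prod_e2norm_LFeps (l := l) ε ρ hρ1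
  exact ⟨lower, height, height ▸ mD_le_prod_e2norm _, le_mD lower⟩
end
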